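/- arXiv:1910.05842 — 2 statements merged into one kernel-verified Lean document; each statement's English description precedes it below -/
import Mathlib

section
/- Let r be a positive integer and let F be a function from pairs (i,j) with 0 ≤ i ≤ j ≤ r to the nonnegative integers that is monotone with respect to interval containment (F(i,j) ≤ F(k,l) whenever (i,j) ⊆ (k,l)). Then there exists a unique multiset BC of intervals (a,b) with 0 ≤ a ≤ b ≤ r such that for every (i,j), F(i,j) equals the number of intervals in BC contained in (i,j), if and only if the Möbius inversion of F over the containment poset of intervals is everywhere nonnegative. -/
/-!
Counting the intervals of `BC` below `J` is the zeta transform of the multiplicity function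
`I ↦ count I BC`. Since the strict containment order on intervals is well founded, the zeta
transform is injective, so `BC` realizes `F` exactly when its multiplicities are the Möbius
inverse `G`. Hence a realizing multiset exists iff `G ≥ 0`, and it is then unique.
-/

/-- Integer intervals (a, b) with 0 ≤ a ≤ b ≤ r. -/
abbrev Itv (r : ℕ) := {p : Fin (r + 1) × Fin (r + 1) // p.1 ≤ p.2}

/-- Containment of intervals: (a,b) ⊆ (c,d) iff c ≤ a and b ≤ d. -/
def itvLE {r : ℕ} (I J : Itv r) : Prop := J.1.1 ≤ I.1.1 ∧ I.1.2 ≤ J.1.2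

instance {r : ℕ} : DecidableRel (itvLE (r := r)) := fun _ _ => instDecidableAnd

open Finset

theorem Multiset.card_filter_eq_sum_count {α : Type*} [Fintype α] [DecidableEq α]
    (s : Multiset α) (p : α → Prop) [DecidablePred p] :
    (s.filter p).card = ∑ a ∈ univ.filter p, s.count a := by
  rw [← Multiset.sum_count_eq_card (s := univ.filter p) (m := s.filter p)
    (fun a ha => by simpa using Multiset.of_mem_filter ha)]
  exact sum_congr rfl fun a ha => Multiset.count_filter_of_pos (mem_filter.1 ha).2

section ZetaTransform

variable {α M : Type*} [Fintype α] {R : α → α → Prop} [DecidableRel R]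

theorem eq_of_sum_filter_eq [AddCancelCommMonoid M] (hrefl : ∀ a, R a a)
    (hwf : WellFounded fun a b => R a b ∧ a ≠ b) {g₁ g₂ : α → M}
    (h : ∀ b, ∑ a ∈ univ.filter (R · b), g₁ a = ∑ a ∈ univ.filter (R · b), g₂ a) :
    g₁ = g₂ := by
  classical
  funext b
  induction b using hwf.induction with
  | _ b ih =>
    have hb : b ∈ univ.filter (R · b) := mem_filter.2 ⟨mem_univ b, hrefl b⟩
    have hlower : ∑ a ∈ (univ.filter (R · b)).erase b, g₁ a
        = ∑ a ∈ (univ.filter (R · b)).erase b, g₂ a :=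
      sum_congr rfl fun a ha => by
        obtain ⟨hab, ha⟩ := mem_erase.1 ha
        exact ih a ⟨(mem_filter.1 ha).2, hab⟩
    have htotal := h b
    rw [← add_sum_erase _ _ hb, ← add_sum_erase _ _ hb, hlower] at htotal
    exact add_right_cancel htotal

variable [DecidableEq α] (hrefl : ∀ a, R a a) (hwf : WellFounded fun a b => R a b ∧ a ≠ b)
  {F : α → ℕ} {G : α → ℤ} (hG : ∀ b, (F b : ℤ) = ∑ a ∈ univ.filter (R · b), G a)
include hrefl hwf hG

theorem realizes_iff_count_eq (s : Multiset α) :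
    (∀ b, F b = (s.filter (R · b)).card) ↔ ∀ a, (s.count a : ℤ) = G a := by
  constructor
  · intro hs
    refine congrFun (eq_of_sum_filter_eq hrefl hwf fun b => ?_)
    rw [← hG b, hs b, Multiset.card_filter_eq_sum_count]
    push_cast
    rfl
  · intro hs b
    rw [Multiset.card_filter_eq_sum_count, ← Int.natCast_inj, hG b]
    push_cast
    exact sum_congr rfl fun a _ => (hs a).symm

theorem existsUnique_realizing_multiset_iff :
    (∃! s : Multiset α, ∀ b, F b = (s.filter (R · b)).card) ↔ ∀ a, 0 ≤ G a := by
  simp only [realizes_iff_count_eq hrefl hwf hG]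
  constructor
  · rintro ⟨s, hs, -⟩ a
    exact hs a ▸ Int.natCast_nonneg _
  · intro hG_nonneg
    refine ⟨Finsupp.toMultiset (Finsupp.equivFunOnFinite.symm fun a => (G a).toNat),
      fun a => by simpa using hG_nonneg a, fun t ht => Multiset.ext.2 fun a => ?_⟩
    simpa [← Int.natCast_inj, ht a] using hG_nonneg a

end ZetaTransform

theorem itvLE_refl {r : ℕ} (I : Itv r) : itvLE I I := ⟨le_rfl, le_rfl⟩

theorem length_lt_of_itvLE_of_ne {r : ℕ} {I J : Itv r} (h : itvLE I J) (hne : I ≠ J) :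
    (I.1.2 : ℕ) - I.1.1 < (J.1.2 : ℕ) - J.1.1 := by
  obtain ⟨h₁, h₂⟩ := h
  have hI := I.2
  have hJ := J.2
  have : ¬((I.1.1 : ℕ) = J.1.1 ∧ (I.1.2 : ℕ) = J.1.2) := fun ⟨e₁, e₂⟩ =>
    hne (Subtype.ext (Prod.ext (Fin.ext e₁) (Fin.ext e₂)))
  simp only [Fin.le_def] at h₁ h₂ hI hJ
  omega

theorem wellFounded_itvLE_ne (r : ℕ) : WellFounded fun I J : Itv r => itvLE I J ∧ I ≠ J :=
  Subrelation.wf (fun h => length_lt_of_itvLE_of_ne h.1 h.2)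
    (measure fun I : Itv r => (I.1.2 : ℕ) - I.1.1).wf

theorem statement3_general (r : ℕ) (F : Itv r → ℕ)
    (Gm : Itv r → ℤ)
    (hG : ∀ J : Itv r, (F J : ℤ) = ∑ I ∈ Finset.univ.filter (fun I => itvLE I J), Gm I) :
    (∃! BC : Multiset (Itv r),
        ∀ J : Itv r, F J = (BC.filter (fun I => itvLE I J)).card)
      ↔ ∀ I : Itv r, 0 ≤ Gm I :=
  existsUnique_realizing_multiset_iff itvLE_refl (wellFounded_itvLE_ne r) hG

/-- Let F be a function on intervals (i,j), 0 ≤ i ≤ j ≤ r, monotone with respect to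
containment, and let Gm be its Möbius inversion over the containment poset, i.e.
F(J) = Σ_{I ⊆ J} Gm(I).  Then there is a unique multiset BC of intervals with
F(i,j) = #{I ∈ BC : I ⊆ (i,j)} for all (i,j) if and only if Gm is everywhere
nonnegative. -/
theorem statement3 (r : ℕ) (F : Itv r → ℕ)
    (hmono : ∀ I J : Itv r, itvLE I J → F I ≤ F J)
    (Gm : Itv r → ℤ)
    (hG : ∀ J : Itv r, (F J : ℤ) = ∑ I ∈ Finset.univ.filter (fun I => itvLE I J), Gm I) :
    (∃! BC : Multiset (Itv r),
        ∀ J : Itv r, F J = (BC.filter (fun I => itvLE I J)).card)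
      ↔ ∀ I : Itv r, 0 ≤ Gm I :=
  statement3_general r F Gm hG
end

section
/- Let G be a finite connected rooted graph of radius r that is 'perfectly coordinated': it is bipartite with every edge joining consecutive distance shells, every vertex at even distance from the root not in the outermost shell has degree d₀, and every vertex at odd distance not in the outermost shell has degree d₁. Then the shell counts (#atoms(k) for 0 ≤ k ≤ r) determine, and are determined by, the sequence F(0, r₀) for 0 ≤ r₀ ≤ r, where F(0, r₀) is the cycle rank of the subgraph induced on vertices within distance r₀ of the root. -/
/-- The cycle rank of a finite graph: #components − #vertices + #edges. -/
noncomputable def cycleRank {V : Type*} [Fintype V] (G : SimpleGraph V) : ℤ :=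
  (Nat.card G.ConnectedComponent : ℤ) - (Fintype.card V : ℤ) + (Nat.card G.edgeSet : ℤ)

/-- The ball of radius r₀: the subgraph induced on vertices within distance r₀ of the root. -/
def ballSubgraph {V : Type*} (G : SimpleGraph V) (v : V) (r₀ : ℕ) : SimpleGraph V where
  Adj a b := G.Adj a b ∧ G.dist v a ≤ r₀ ∧ G.dist v b ≤ r₀
  symm := ⟨fun _ _ ⟨h, h1, h2⟩ => ⟨h.symm, h2, h1⟩⟩
  loopless := ⟨fun a h => G.loopless.irrefl a h.1⟩

/-- #atoms(k): the number of vertices at distance exactly k from the root. -/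
noncomputable def shellCount {V : Type*} [Fintype V] (G : SimpleGraph V) (v : V) (k : ℕ) : ℕ :=
  Nat.card {u : V | G.dist v u = k}

/-!
Write `a k` for the shell counts and `P k` for the number of edges between shells `k` and
`k + 1`. Since every edge joins consecutive shells, counting the darts leaving shell `k < r` gives
`a k * deg k = P k + P (k - 1)`, so the `P k` are determined by the shells. Inside the ball of
radius `r₀` every vertex is joined to the root, while each vertex outside is an isolated
component; hence `F r₀ = 1 - ∑_{k ≤ r₀} a k + ∑_{k < r₀} P k`. Conversely, from `a 0 = 1` and
`F (k + 1) - F k = P k - a (k + 1)` the shells are recovered one at a time.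
-/

open SimpleGraph Finset

section Recurrence

variable (deg : ℕ → ℕ)

def upEdgeCount (a : ℕ → ℤ) : ℕ → ℤ
  | 0 => a 0 * deg 0
  | k + 1 => a (k + 1) * deg (k + 1) - upEdgeCount a k

def ballCycleRank (a : ℕ → ℤ) (r₀ : ℕ) : ℤ :=
  1 - ∑ k ∈ range (r₀ + 1), a k + ∑ k ∈ range r₀, upEdgeCount deg a k

def shellRecovery (F : ℕ → ℤ) : ℕ → ℤ × ℤ
  | 0 => (1, deg 0)
  | k + 1 =>
      let shell := (shellRecovery F k).2 - (F (k + 1) - F k)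
      (shell, shell * deg (k + 1) - (shellRecovery F k).2)

variable {deg}

lemma ballCycleRank_succ_sub_ballCycleRank (a : ℕ → ℤ) (k : ℕ) :
    ballCycleRank deg a (k + 1) - ballCycleRank deg a k = upEdgeCount deg a k - a (k + 1) := by
  simp only [ballCycleRank, sum_range_succ _ (k + 1), sum_range_succ _ k]
  ring

lemma shellRecovery_eq {a : ℕ → ℤ} {F : ℕ → ℤ} (ha : a 0 = 1) :
    ∀ k, (∀ j ≤ k, F j = ballCycleRank deg a j) →
      shellRecovery deg F k = (a k, upEdgeCount deg a k)
  | 0, _ => by simp [shellRecovery, upEdgeCount, ha]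
  | k + 1, hF => by
    have hshell : upEdgeCount deg a k - (F (k + 1) - F k) = a (k + 1) := by
      rw [hF _ le_rfl, hF k k.le_succ, ballCycleRank_succ_sub_ballCycleRank]
      ring
    simp only [shellRecovery, shellRecovery_eq ha k fun j hj => hF j (hj.trans k.le_succ),
      hshell, upEdgeCount]

end Recurrence

section Shells

variable {V : Type*} {G : SimpleGraph V} {v : V}

lemma exists_adj_dist_eq_of_dist_eq_succ (hconn : G.Connected) {a : V} {n : ℕ}
    (ha : G.dist v a = n + 1) : ∃ b, G.Adj b a ∧ G.dist v b = n := by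
  obtain ⟨p, hp⟩ := hconn.exists_walk_length_eq_dist a v
  cases p with
  | nil => simp at ha
  | @cons _ b _ hab q =>
    have hq : G.dist v b ≤ n := by
      have := dist_le q
      rw [Walk.length_cons, G.dist_comm, ha] at hp
      rw [G.dist_comm]
      omega
    have hva : G.dist v a ≤ G.dist v b + 1 := by
      simpa [dist_eq_one_iff_adj.mpr hab.symm] using
        hconn.dist_triangle (u := v) (v := b) (w := a)
    exact ⟨b, hab.symm, by omega⟩

lemma reachable_ballSubgraph_of_dist_le (hconn : G.Connected) {r₀ : ℕ} {a : V}
    (ha : G.dist v a ≤ r₀) : (ballSubgraph G v r₀).Reachable v a := by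
  induction hn : G.dist v a generalizing a with
  | zero => rw [hconn.dist_eq_zero_iff.mp hn]
  | succ n ih =>
    obtain ⟨b, hba, hb⟩ := exists_adj_dist_eq_of_dist_eq_succ hconn hn
    exact (ih (by omega) hb).trans (Adj.reachable ⟨hba, by omega, by omega⟩)

lemma eq_of_reachable_ballSubgraph {r₀ : ℕ} {a b : V} (ha : r₀ < G.dist v a)
    (h : (ballSubgraph G v r₀).Reachable a b) : a = b := by
  obtain ⟨p⟩ := h
  cases p with
  | nil => rfl
  | cons hadj _ => exact absurd hadj.2.1 (by omega)

lemma card_connectedComponent_ballSubgraph [Finite V] (hconn : G.Connected) (r₀ : ℕ) :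
    Nat.card (ballSubgraph G v r₀).ConnectedComponent = {u | r₀ < G.dist v u}.ncard + 1 := by
  let mk : Option {u | r₀ < G.dist v u} → (ballSubgraph G v r₀).ConnectedComponent :=
    fun o => (ballSubgraph G v r₀).connectedComponentMk (o.elim v Subtype.val)
  have hmk : mk.Bijective := by
    refine ⟨?_, fun c => c.ind fun a => ?_⟩
    · rintro (_ | ⟨a, ha⟩) (_ | ⟨b, hb⟩) h <;>
        simp only [mk, Option.elim, ConnectedComponent.eq] at h
      · rfl
      · exact absurd (eq_of_reachable_ballSubgraph hb h.symm) (by rintro rfl; simp at hb)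
      · exact absurd (eq_of_reachable_ballSubgraph ha h) (by rintro rfl; simp at ha)
      · exact congrArg some (Subtype.ext (eq_of_reachable_ballSubgraph ha h))
    · by_cases ha : r₀ < G.dist v a
      · exact ⟨some ⟨a, ha⟩, rfl⟩
      · exact ⟨none, ConnectedComponent.sound
          (reachable_ballSubgraph_of_dist_le hconn (by omega))⟩
  rw [← Nat.card_eq_of_bijective mk hmk, Finite.card_option, Nat.card_coe_set_eq]

end Shells

section Counting

variable {V : Type*} [Fintype V] {G : SimpleGraph V} {v : V}

lemma card_eq_sum_shellCount_add_ncard (r₀ : ℕ) :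
    Fintype.card V = ∑ k ∈ range (r₀ + 1), shellCount G v k + {u | r₀ < G.dist v u}.ncard := by
  induction r₀ with
  | zero =>
    have hcompl : {u | 0 < G.dist v u} = {u | G.dist v u = 0}ᶜ := by
      ext u; simp [Nat.pos_iff_ne_zero]
    rw [sum_range_one, shellCount, Nat.card_coe_set_eq, hcompl, Set.ncard_add_ncard_compl,
      Nat.card_eq_fintype_card]
  | succ r₀ ih =>
    have hsplit :
        {u | r₀ < G.dist v u} = {u | G.dist v u = r₀ + 1} ∪ {u | r₀ + 1 < G.dist v u} := by
      ext u; simp only [Set.mem_ofPred_eq, Set.mem_union]; omega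
    have hdisj : Disjoint {u | G.dist v u = r₀ + 1} {u | r₀ + 1 < G.dist v u} :=
      Set.disjoint_left.mpr fun u hu hu' => by simp_all
    rw [ih, hsplit, Set.ncard_union_eq hdisj, sum_range_succ _ (r₀ + 1), shellCount,
      Nat.card_coe_set_eq, add_assoc]

lemma shellCount_zero (hconn : G.Connected) : shellCount G v 0 = 1 := by
  simp [shellCount, hconn.dist_eq_zero_iff]

variable (G v) in
def upEdges (k : ℕ) : Set (V × V) :=
  {p | G.Adj p.1 p.2 ∧ G.dist v p.1 = k ∧ G.dist v p.2 = k + 1}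

variable (G v) in
def shellDarts (k : ℕ) : Set (V × V) := {p | G.Adj p.1 p.2 ∧ G.dist v p.1 = k}

lemma ncard_shellDarts {r : ℕ} {deg : ℕ → ℕ}
    (hdeg : ∀ u, G.dist v u < r → Nat.card (G.neighborSet u) = deg (G.dist v u))
    {k : ℕ} (hk : k < r) : (shellDarts G v k).ncard = shellCount G v k * deg k := by
  classical
  let e : shellDarts G v k ≃ Σ u : {u // G.dist v u = k}, G.neighborSet u :=
    { toFun := fun p => ⟨⟨p.1.1, p.2.2⟩, ⟨p.1.2, p.2.1⟩⟩
      invFun := fun s => ⟨(s.1.1, s.2.1), s.2.2, s.1.2⟩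
      left_inv := fun _ => rfl
      right_inv := fun _ => rfl }
  have hfiber (u : {u // G.dist v u = k}) : Nat.card (G.neighborSet u) = deg k := by
    rw [hdeg u (by rw [u.2]; exact hk), u.2]
  rw [← Nat.card_coe_set_eq, Nat.card_congr e, Nat.card_sigma, sum_congr rfl fun u _ => hfiber u,
    sum_const, card_univ, smul_eq_mul, shellCount, ← Nat.card_eq_fintype_card]
  rfl

end Counting

section Layered

variable {V : Type*} {G : SimpleGraph V} {v : V}

variable (G v) in
def EdgesJoinConsecutiveShells : Prop :=
  ∀ a b, G.Adj a b → G.dist v a + 1 = G.dist v b ∨ G.dist v b + 1 = G.dist v a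

lemma shellDarts_zero (hG : EdgesJoinConsecutiveShells G v) :
    shellDarts G v 0 = upEdges G v 0 := by
  ext ⟨a, b⟩
  simp only [shellDarts, upEdges, Set.mem_ofPred_eq]
  constructor
  · rintro ⟨hab, ha⟩
    exact ⟨hab, ha, by rcases hG a b hab with h | h <;> omega⟩
  · rintro ⟨hab, ha, -⟩
    exact ⟨hab, ha⟩

lemma ncard_shellDarts_succ [Finite V] (hG : EdgesJoinConsecutiveShells G v) (k : ℕ) :
    (shellDarts G v (k + 1)).ncard = (upEdges G v (k + 1)).ncard + (upEdges G v k).ncard := by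
  have hsplit : shellDarts G v (k + 1) = upEdges G v (k + 1) ∪ Prod.swap '' upEdges G v k := by
    ext ⟨a, b⟩
    simp only [shellDarts, upEdges, Set.mem_ofPred_eq, Set.mem_union, Set.mem_image,
      Prod.exists, Prod.swap_prod_mk, Prod.mk.injEq]
    constructor
    · rintro ⟨hab, ha⟩
      rcases hG a b hab with h | h
      · exact Or.inl ⟨hab, ha, by omega⟩
      · exact Or.inr ⟨b, a, ⟨hab.symm, by omega, ha⟩, rfl, rfl⟩
    · rintro (⟨hab, ha, -⟩ | ⟨b, a, ⟨hba, -, hb⟩, rfl, rfl⟩)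
      · exact ⟨hab, ha⟩
      · exact ⟨hba.symm, hb⟩
  have hdisj : Disjoint (upEdges G v (k + 1)) (Prod.swap '' upEdges G v k) := by
    rw [Set.disjoint_left]
    rintro _ ⟨-, -, hb⟩ ⟨⟨a, b⟩, ⟨-, ha, -⟩, rfl⟩
    change G.dist v a = k + 1 + 1 at hb
    dsimp only at ha
    omega
  rw [hsplit, Set.ncard_union_eq hdisj, Set.ncard_image_of_injective _ Prod.swap_injective]

lemma ncard_edgeSet_ballSubgraph [Finite V] (hG : EdgesJoinConsecutiveShells G v) (r₀ : ℕ) :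
    (ballSubgraph G v r₀).edgeSet.ncard = ∑ k ∈ range r₀, (upEdges G v k).ncard := by
  induction r₀ with
  | zero =>
    suffices (ballSubgraph G v 0).edgeSet = ∅ by simp [this]
    refine Set.eq_empty_of_forall_notMem fun e => e.ind fun a b ⟨hab, ha, hb⟩ => ?_
    dsimp only at hab ha hb
    rcases hG a b hab with h | h <;> omega
  | succ k ih =>
    let edge : V × V → Sym2 V := fun p => s(p.1, p.2)
    have hsplit : (ballSubgraph G v (k + 1)).edgeSet
        = (ballSubgraph G v k).edgeSet ∪ edge '' upEdges G v k := by
      ext e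
      refine e.ind fun a b => ?_
      simp only [Set.mem_union, mem_edgeSet, Set.mem_image, upEdges, Set.mem_ofPred_eq,
        Prod.exists, edge, ballSubgraph]
      constructor
      · rintro ⟨hab, ha, hb⟩
        rcases hG a b hab with h | h
        · by_cases hbk : G.dist v b ≤ k
          · exact Or.inl ⟨hab, by omega, hbk⟩
          · exact Or.inr ⟨a, b, ⟨hab, by omega, by omega⟩, rfl⟩
        · by_cases hak : G.dist v a ≤ k
          · exact Or.inl ⟨hab, hak, by omega⟩
          · exact Or.inr ⟨b, a, ⟨hab.symm, by omega, by omega⟩, Sym2.eq_swap⟩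
      · rintro (⟨hab, ha, hb⟩ | ⟨x, y, ⟨hxy, hx, hy⟩, he⟩)
        · exact ⟨hab, by omega, by omega⟩
        · rcases Sym2.eq_iff.mp he with ⟨rfl, rfl⟩ | ⟨rfl, rfl⟩
          · exact ⟨hxy, by omega, by omega⟩
          · exact ⟨hxy.symm, by omega, by omega⟩
    have hdisj : Disjoint (ballSubgraph G v k).edgeSet (edge '' upEdges G v k) := by
      rw [Set.disjoint_right]
      rintro _ ⟨⟨a, b⟩, ⟨-, -, hb⟩, rfl⟩ ⟨-, -, hbk⟩
      dsimp only at hb hbk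
      omega
    have hinj : Set.InjOn edge (upEdges G v k) := by
      rintro ⟨a, b⟩ ⟨-, ha, -⟩ ⟨c, d⟩ ⟨-, -, hd⟩ he
      rcases Sym2.eq_iff.mp he with ⟨rfl, rfl⟩ | ⟨rfl, rfl⟩
      · rfl
      · dsimp only at ha hd; omega
    rw [hsplit, Set.ncard_union_eq hdisj, hinj.ncard_image, ih, sum_range_succ]

lemma ncard_upEdges_eq_upEdgeCount [Fintype V] (hG : EdgesJoinConsecutiveShells G v)
    {r : ℕ} {deg : ℕ → ℕ}
    (hdeg : ∀ u, G.dist v u < r → Nat.card (G.neighborSet u) = deg (G.dist v u)) :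
    ∀ k < r, ((upEdges G v k).ncard : ℤ) = upEdgeCount deg (fun k => shellCount G v k) k
  | 0, hr => by
    rw [← shellDarts_zero hG, ncard_shellDarts hdeg hr, upEdgeCount]
    push_cast; rfl
  | k + 1, hr => by
    have hdarts := ncard_shellDarts_succ hG k
    rw [ncard_shellDarts hdeg hr] at hdarts
    rw [upEdgeCount, ← ncard_upEdges_eq_upEdgeCount hG hdeg k (by omega)]
    zify at hdarts
    linarith

end Layered

lemma cycleRank_ballSubgraph {V : Type*} [Fintype V] {G : SimpleGraph V} {v : V}
    (hconn : G.Connected) (hG : EdgesJoinConsecutiveShells G v) {r : ℕ} {deg : ℕ → ℕ}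
    (hdeg : ∀ u, G.dist v u < r → Nat.card (G.neighborSet u) = deg (G.dist v u))
    {r₀ : ℕ} (hr₀ : r₀ ≤ r) :
    cycleRank (ballSubgraph G v r₀) = ballCycleRank deg (fun k => shellCount G v k) r₀ := by
  have hedges : ((ballSubgraph G v r₀).edgeSet.ncard : ℤ)
      = ∑ k ∈ range r₀, upEdgeCount deg (fun k => shellCount G v k) k := by
    rw [ncard_edgeSet_ballSubgraph hG, Nat.cast_sum]
    exact sum_congr rfl fun k hk => ncard_upEdges_eq_upEdgeCount hG hdeg k <| by
      rw [mem_range] at hk; omega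
  rw [cycleRank, card_connectedComponent_ballSubgraph hconn, card_eq_sum_shellCount_add_ncard r₀,
    Nat.card_coe_set_eq, hedges, ballCycleRank]
  push_cast
  ring

/-- For perfectly coordinated rooted graphs (connected, bipartite with edges joining
consecutive shells, interior vertices at even distance of degree d₀ and at odd distance of
degree d₁), the shell counts #atoms(k), 0 ≤ k ≤ r, determine and are determined by the
sequence F(0,r₀) of cycle ranks of the balls of radius r₀ ≤ r:  there are functions Φ, Ψ
(depending only on r, d₀, d₁) computing each sequence from the other. -/
theorem statement6 (r d₀ d₁ : ℕ) :
    ∃ (Φ : (ℕ → ℕ) → (ℕ → ℤ)) (Ψ : (ℕ → ℤ) → (ℕ → ℕ)),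
      ∀ (V : Type) [Fintype V] (G : SimpleGraph V) (v : V),
        G.Connected →
        (∀ u : V, G.dist v u ≤ r) →
        (∀ a b : V, G.Adj a b →
          G.dist v a + 1 = G.dist v b ∨ G.dist v b + 1 = G.dist v a) →
        (∀ u : V, G.dist v u < r →
          Nat.card (G.neighborSet u) = if Even (G.dist v u) then d₀ else d₁) →
        (∀ r₀ : ℕ, r₀ ≤ r →
            Φ (fun k => shellCount G v k) r₀ = cycleRank (ballSubgraph G v r₀)) ∧
        (∀ k : ℕ, k ≤ r →
            Ψ (fun r₀ => cycleRank (ballSubgraph G v r₀)) k = shellCount G v k) := by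
  let deg : ℕ → ℕ := fun k => if Even k then d₀ else d₁
  refine ⟨fun a => ballCycleRank deg (fun k => a k), fun F k => (shellRecovery deg F k).1.toNat, ?_⟩
  intro V _ G v hconn _ hG hdeg
  have hF (r₀ : ℕ) (hr₀ : r₀ ≤ r) :=
    cycleRank_ballSubgraph (deg := deg) hconn hG hdeg hr₀
  refine ⟨fun r₀ hr₀ => (hF r₀ hr₀).symm, fun k hk => ?_⟩
  have hshell₀ : ((shellCount G v 0 : ℕ) : ℤ) = 1 := by simp [shellCount_zero hconn]
  show (shellRecovery deg _ k).1.toNat = _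
  rw [shellRecovery_eq hshell₀ k fun j hj => hF j (hj.trans hk), Int.toNat_natCast]
end
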